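/- For any total timed HT-trace ⟨T,T,τ⟩ of length λ, any metric dynamic formula φ and any point k with 0 ≤ k < λ, satisfaction of φ at k in the HT semantics coincides with satisfaction of φ at k in the classical (MDL) semantics obtained by evaluating both 'here' and 'there' components as T. -/

import Mathlib

mutual
/-- Metric dynamic formulas over atoms `A`. -/
inductive DF (A : Type) : Type
  | atom : A → DF A
  | bot  : DF A
  | conj : DF A → DF A → DF A
  | disj : DF A → DF A → DF A
  | impl : DF A → DF A → DF A
  | diam : PE A → Set ℤ → DF A → DF A   -- ⟨ρ⟩_I φ
  | box  : PE A → Set ℤ → DF A → DF A   -- [ρ]_I φ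
/-- Path expressions. -/
inductive PE (A : Type) : Type
  | step   : PE A                 -- single time step τ
  | test   : DF A → PE A          -- φ?
  | seq    : PE A → PE A → PE A   -- ρ₁;ρ₂
  | choice : PE A → PE A → PE A   -- ρ₁+ρ₂
  | star   : PE A → PE A          -- ρ*
  | conv   : PE A → PE A          -- ρ⁻
end

mutual
/-- MDHT satisfaction of metric dynamic formulas on a timed HT-trace. -/
def SatD {A : Type} (τ : ℕ → ℤ) (lam : ℕ) :
    (ℕ → Set A) → (ℕ → Set A) → ℕ → DF A → Prop
  | H, _, k, .atom a => a ∈ H k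
  | _, _, _, .bot => False
  | H, T, k, .conj φ ψ => SatD τ lam H T k φ ∧ SatD τ lam H T k ψ
  | H, T, k, .disj φ ψ => SatD τ lam H T k φ ∨ SatD τ lam H T k ψ
  | H, T, k, .impl φ ψ =>
      (SatD τ lam H T k φ → SatD τ lam H T k ψ) ∧
      (SatD τ lam T T k φ → SatD τ lam T T k ψ)
  | H, T, k, .diam ρ I φ =>
      ∃ i, RelD τ lam H T ρ k i ∧ τ i - τ k ∈ I ∧ SatD τ lam H T i φ
  | H, T, k, .box ρ I φ =>
      (∀ i, RelD τ lam H T ρ k i → τ i - τ k ∈ I → SatD τ lam H T i φ) ∧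
      (∀ i, RelD τ lam T T ρ k i → τ i - τ k ∈ I → SatD τ lam T T i φ)
/-- MDHT accessibility relation of path expressions on a timed HT-trace. -/
def RelD {A : Type} (τ : ℕ → ℤ) (lam : ℕ) :
    (ℕ → Set A) → (ℕ → Set A) → PE A → ℕ → ℕ → Prop
  | _, _, .step, k, i => i = k + 1 ∧ i < lam
  | H, T, .test φ, k, i => i = k ∧ SatD τ lam H T k φ
  | H, T, .seq ρ1 ρ2, k, i => ∃ j, RelD τ lam H T ρ1 k j ∧ RelD τ lam H T ρ2 j i
  | H, T, .choice ρ1 ρ2, k, i => RelD τ lam H T ρ1 k i ∨ RelD τ lam H T ρ2 k i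
  | H, T, .star ρ, k, i => Relation.ReflTransGen (fun a b => RelD τ lam H T ρ a b) k i
  | H, T, .conv ρ, k, i => RelD τ lam H T ρ i k
end

mutual
/-- Classical (MDL) satisfaction of metric dynamic formulas on a timed trace. -/
def SatDC {A : Type} (τ : ℕ → ℤ) (lam : ℕ) (T : ℕ → Set A) : ℕ → DF A → Prop
  | k, .atom a => a ∈ T k
  | _, .bot => False
  | k, .conj φ ψ => SatDC τ lam T k φ ∧ SatDC τ lam T k ψ
  | k, .disj φ ψ => SatDC τ lam T k φ ∨ SatDC τ lam T k ψ
  | k, .impl φ ψ => SatDC τ lam T k φ → SatDC τ lam T k ψ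
  | k, .diam ρ I φ => ∃ i, RelDC τ lam T ρ k i ∧ τ i - τ k ∈ I ∧ SatDC τ lam T i φ
  | k, .box ρ I φ => ∀ i, RelDC τ lam T ρ k i → τ i - τ k ∈ I → SatDC τ lam T i φ
/-- Classical (MDL) accessibility relation. -/
def RelDC {A : Type} (τ : ℕ → ℤ) (lam : ℕ) (T : ℕ → Set A) : PE A → ℕ → ℕ → Prop
  | .step, k, i => i = k + 1 ∧ i < lam
  | .test φ, k, i => i = k ∧ SatDC τ lam T k φ
  | .seq ρ1 ρ2, k, i => ∃ j, RelDC τ lam T ρ1 k j ∧ RelDC τ lam T ρ2 j i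
  | .choice ρ1 ρ2, k, i => RelDC τ lam T ρ1 k i ∨ RelDC τ lam T ρ2 k i
  | .star ρ, k, i => Relation.ReflTransGen (fun a b => RelDC τ lam T ρ a b) k i
  | .conv ρ, k, i => RelDC τ lam T ρ i k
end

/-! On a total trace the second conjunct of the HT clauses for `→` and `[ρ]_I` repeats the first,
so the two semantics agree by simultaneous structural induction on formulas and path expressions. -/

mutual
theorem satD_self_iff_satDC {A : Type} (τ : ℕ → ℤ) (lam : ℕ) (T : ℕ → Set A) :
    ∀ (φ : DF A) (k : ℕ), SatD τ lam T T k φ ↔ SatDC τ lam T k φ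
  | .atom _, _ => Iff.rfl
  | .bot, _ => Iff.rfl
  | .conj φ ψ, k =>
      and_congr (satD_self_iff_satDC τ lam T φ k) (satD_self_iff_satDC τ lam T ψ k)
  | .disj φ ψ, k =>
      or_congr (satD_self_iff_satDC τ lam T φ k) (satD_self_iff_satDC τ lam T ψ k)
  | .impl φ ψ, k => and_self_iff.trans <|
      imp_congr (satD_self_iff_satDC τ lam T φ k) (satD_self_iff_satDC τ lam T ψ k)
  | .diam ρ _ φ, k => exists_congr fun i =>
      and_congr (relD_self_iff_relDC τ lam T ρ k i)
        (and_congr_right' (satD_self_iff_satDC τ lam T φ i))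
  | .box ρ _ φ, k => and_self_iff.trans <| forall_congr' fun i =>
      imp_congr (relD_self_iff_relDC τ lam T ρ k i)
        (imp_congr_right fun _ => satD_self_iff_satDC τ lam T φ i)

theorem relD_self_iff_relDC {A : Type} (τ : ℕ → ℤ) (lam : ℕ) (T : ℕ → Set A) :
    ∀ (ρ : PE A) (k i : ℕ), RelD τ lam T T ρ k i ↔ RelDC τ lam T ρ k i
  | .step, _, _ => Iff.rfl
  | .test φ, k, _ => and_congr_right' (satD_self_iff_satDC τ lam T φ k)
  | .seq ρ₁ ρ₂, k, i => exists_congr fun j =>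
      and_congr (relD_self_iff_relDC τ lam T ρ₁ k j) (relD_self_iff_relDC τ lam T ρ₂ j i)
  | .choice ρ₁ ρ₂, k, i =>
      or_congr (relD_self_iff_relDC τ lam T ρ₁ k i) (relD_self_iff_relDC τ lam T ρ₂ k i)
  | .star ρ, k, i =>
      ⟨Relation.ReflTransGen.mono (fun a b => (relD_self_iff_relDC τ lam T ρ a b).1) k i,
        Relation.ReflTransGen.mono (fun a b => (relD_self_iff_relDC τ lam T ρ a b).2) k i⟩
  | .conv ρ, k, i => relD_self_iff_relDC τ lam T ρ i k
end

/-- On a total timed trace `⟨T,T,τ⟩`, MDHT satisfaction of any metric dynamic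
formula coincides with classical MDL satisfaction. -/
theorem total_mdht_iff_mdl {A : Type} (T : ℕ → Set A) (τ : ℕ → ℤ) (lam : ℕ)
    (hτ : Monotone τ) (φ : DF A) (k : ℕ) (hk : k < lam) :
    SatD τ lam T T k φ ↔ SatDC τ lam T k φ :=
  satD_self_iff_satDC τ lam T φ k
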